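/- Let T be a weighted tree with ρ > 0 under the postal model. For any two distinct vertices x, y of T, b_time(x, T) ≥ d(x,y)·ρ + w̃(x,y) + b_time(y, B(y,x)), where d(x,y) and w̃(x,y) are the hop-count and total weight of the x-to-y path and B(y,x) is T minus the component of T − y containing x. -/

import Mathlib

/-!
Common definitions for the postal-model broadcasting problem on weighted trees.
-/

open SimpleGraph

namespace Postal

attribute [local instance] Classical.propDecidable

variable {V : Type*} [Fintype V] [DecidableEq V] (G : SimpleGraph V)

/-- The unique path (as a walk) between two vertices of a tree. -/
noncomputable def tPath (hG : G.IsTree) (u v : V) : G.Walk u v :=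
  (hG.existsUnique_path u v).exists.choose

/-- `z` lies in the open branch `O(x,y)`: the component of `T - x` containing `y`. -/
def inO (x y z : V) : Prop := ∃ p : G.Walk y z, x ∉ p.support

/-- The open branch `O(x,y)`. -/
def Obr (x y : V) : Set V := {z | inO G x y z}

/-- The closed branch `B(x,y) = T - O(x,y)` (it contains `x`). -/
def Bbr (x y : V) : Set V := {z | ¬ inO G x y z}

/-- The parent of `z` with respect to the root `u`: the penultimate vertex on the
unique `u`-to-`z` path. -/
noncomputable def parent (hG : G.IsTree) (u z : V) : V :=
  (tPath G hG u z).getVert ((tPath G hG u z).length - 1)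

/-- The receive time of `z` under schedule `σ` when `u` originates the message:
along the unique `u`-to-`z` path, each vertex is contacted in its slot `σ`,
contributing `σ·ρ` connection time plus the edge weight. -/
noncomputable def recvTime (hG : G.IsTree) (w : V → V → ℝ) (ρ : ℝ) (σ : V → ℕ) (u z : V) : ℝ :=
  ((tPath G hG u z).darts.map (fun d => (σ d.toProd.2 : ℝ) * ρ + w d.toProd.1 d.toProd.2)).sum

/-- A schedule `σ` is valid for source `u` broadcasting over the vertex set `S`:
every non-source vertex gets a slot `≥ 1`, and distinct vertices with the same
parent get distinct slots (a sender contacts its neighbors sequentially). -/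
def Valid (hG : G.IsTree) (σ : V → ℕ) (u : V) (S : Set V) : Prop :=
  (∀ z ∈ S, z ≠ u → 1 ≤ σ z) ∧
  (∀ z₁ ∈ S, ∀ z₂ ∈ S, z₁ ≠ u → z₂ ≠ u → z₁ ≠ z₂ →
    parent G hG u z₁ = parent G hG u z₂ → σ z₁ ≠ σ z₂)

/-- The minimum broadcast time for `u` to broadcast a message over the subtree
induced by `S` under the postal model with latency `ρ`. -/
noncomputable def bTime (hG : G.IsTree) (w : V → V → ℝ) (ρ : ℝ) (u : V) (S : Set V) : ℝ :=
  sInf {m | ∃ σ, Valid G hG σ u S ∧ m = sSup ((recvTime G hG w ρ σ u) '' S)}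

/-- Broadcast time over the whole tree. -/
noncomputable def bTimeT (hG : G.IsTree) (w : V → V → ℝ) (ρ : ℝ) (u : V) : ℝ :=
  bTime G hG w ρ u Set.univ

/-- The set of broadcast centers. -/
def BCtr (hG : G.IsTree) (w : V → V → ℝ) (ρ : ℝ) : Set V :=
  {u | ∀ v, bTimeT G hG w ρ u ≤ bTimeT G hG w ρ v}

/-- A prime broadcast center. -/
def IsPrime (hG : G.IsTree) (w : V → V → ℝ) (ρ : ℝ) (κ : V) : Prop :=
  κ ∈ BCtr G hG w ρ ∧
  ∀ u, G.Adj κ u → bTime G hG w ρ u (Bbr G u κ) ≤ bTime G hG w ρ κ (Bbr G κ u)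

/-- Hop distance: number of edges on the unique path. -/
noncomputable def hop (hG : G.IsTree) (x y : V) : ℕ := (tPath G hG x y).length

/-- Total weight of the unique `x`-to-`y` path. -/
noncomputable def pw (hG : G.IsTree) (w : V → V → ℝ) (x y : V) : ℝ :=
  ((tPath G hG x y).darts.map (fun d => w d.toProd.1 d.toProd.2)).sum

/-- Symmetric weight function. -/
def Wsymm (w : V → V → ℝ) : Prop := ∀ a b, w a b = w b a

/-- Positive weights on edges. -/
def Wpos (w : V → V → ℝ) : Prop := ∀ a b, G.Adj a b → 0 < w a b

/-- A scenario: a symmetric weight assignment within the uncertainty intervals. -/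
def Scenario (lo hi : V → V → ℝ) (w : V → V → ℝ) : Prop :=
  (∀ a b, w a b = w b a) ∧ ∀ a b, G.Adj a b → lo a b ≤ w a b ∧ w a b ≤ hi a b

/-- The maximum regret of `x`. -/
noncomputable def maxRegret (hG : G.IsTree) (lo hi : V → V → ℝ) (ρ : ℝ) (x : V) : ℝ :=
  sSup {r | ∃ w y, Scenario G lo hi w ∧ r = bTimeT G hG w ρ x - bTimeT G hG w ρ y}

/-- `w` is a worst-case scenario of the tree with respect to `x`. -/
def WorstCase (hG : G.IsTree) (lo hi : V → V → ℝ) (ρ : ℝ) (x : V) (w : V → V → ℝ) : Prop :=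
  Scenario G lo hi w ∧
  ∃ y, bTimeT G hG w ρ x - bTimeT G hG w ρ y = maxRegret G hG lo hi ρ x

/-- An edge `(a,b)` lies on the unique `x`-to-`y` path. -/
def onPath (hG : G.IsTree) (x y a b : V) : Prop :=
  a ∈ (tPath G hG x y).support ∧ b ∈ (tPath G hG x y).support

/-- The base scenario `α_{x,y}`: weight `hi` on the `x`-to-`y` path and on edges of
`B(y,x)`, weight `lo` elsewhere. -/
noncomputable def baseScenario (hG : G.IsTree) (lo hi : V → V → ℝ) (x y : V) : V → V → ℝ :=
  fun a b =>
    if onPath G hG x y a b ∨ (a ∈ Bbr G y x ∧ b ∈ Bbr G y x) then hi a b else lo a b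

/-- The value `w(y,v) + b_time(v, B(v,y))` of a neighbor `v` of `y`. -/
noncomputable def nval (hG : G.IsTree) (w : V → V → ℝ) (ρ : ℝ) (y v : V) : ℝ :=
  w y v + bTime G hG w ρ v (Bbr G v y)

/-- Scenario `β^j_{x,y}`: agrees with `α_{x,y}`, except that every edge in
`{(y,u_k)} ∪ E(B(u_k,y))` for `k > j` (with `u` the 1-based sorted enumeration
of the neighbors of `y` in `B(y,x)`) gets weight `lo`. -/
noncomputable def betaScenario (hG : G.IsTree) (lo hi : V → V → ℝ) (x y : V) {h : ℕ}
    (u : Fin h → V) (j : ℕ) : V → V → ℝ :=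
  fun a b =>
    if ∃ k : Fin h, j < (k : ℕ) + 1 ∧
        ((a = y ∧ b = u k) ∨ (b = y ∧ a = u k) ∨
          (a ∈ Bbr G (u k) y ∧ b ∈ Bbr G (u k) y)) then
      lo a b
    else baseScenario G hG lo hi x y a b

/-- Scenario `γ^j_{x,y}`: agrees with `α_{x,y}` on the edges in
`⋃_{1 ≤ k ≤ j} ({(y,u_k)} ∪ E(B(u_k,y)))` and with the scenario `s` elsewhere. -/
noncomputable def gammaScenario (hG : G.IsTree) (lo hi : V → V → ℝ) (s : V → V → ℝ)
    (x y : V) {h : ℕ} (u : Fin h → V) (j : ℕ) : V → V → ℝ :=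
  fun a b =>
    if ∃ k : Fin h, (k : ℕ) + 1 ≤ j ∧
        ((a = y ∧ b = u k) ∨ (b = y ∧ a = u k) ∨
          (a ∈ Bbr G (u k) y ∧ b ∈ Bbr G (u k) y)) then
      baseScenario G hG lo hi x y a b
    else s a b

/-- The set of neighbors of `y` inside the branch `B(y,x)`. -/
def nbrIn (x y : V) : Set V := {v | G.Adj y v ∧ v ∈ Bbr G y x}

/-!
Every vertex of `B(y,x)` is reached from `x` through `y`, so a valid schedule for `x` on the whole
tree restricts to a valid schedule for `y` on `B(y,x)`, with the receive times of `B(y,x)` shifted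
by the receive time of `y`. That receive time is at least `d(x,y)·ρ + w̃(x,y)`, since every slot
on the path is at least `1`.
-/

section Paths

variable {V : Type*} {G : SimpleGraph V}

lemma _root_.SimpleGraph.Walk.IsPath.snd_ne_start_of_mem_darts {u v : V} {p : G.Walk u v}
    (hp : p.IsPath) {d : G.Dart} (hd : d ∈ p.darts) : d.snd ≠ u := by
  have hnd := hp.support_nodup
  rw [← p.cons_tail_support, List.nodup_cons, ← p.map_snd_darts] at hnd
  exact fun h => hnd.1 (List.mem_map.mpr ⟨d, hd, h⟩)

variable (G) (hG : G.IsTree)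

lemma tPath_isPath (u v : V) : (tPath G hG u v).IsPath :=
  (hG.existsUnique_path u v).exists.choose_spec

lemma tPath_eq_of_isPath {u v : V} {p : G.Walk u v} (hp : p.IsPath) : tPath G hG u v = p :=
  (hG.existsUnique_path u v).unique (tPath_isPath G hG u v) hp

lemma tPath_self (u : V) : tPath G hG u u = Walk.nil :=
  tPath_eq_of_isPath G hG Walk.IsPath.nil

lemma tPath_eq_append_of_mem_support {x y z : V} (hy : y ∈ (tPath G hG x z).support) :
    tPath G hG x z = (tPath G hG x y).append (tPath G hG y z) := by
  rw [tPath_eq_of_isPath G hG ((tPath_isPath G hG x z).takeUntil hy),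
    tPath_eq_of_isPath G hG ((tPath_isPath G hG x z).dropUntil hy), Walk.take_spec]

lemma mem_support_tPath_of_mem_Bbr {x y z : V} (hz : z ∈ Bbr G y x) :
    y ∈ (tPath G hG x z).support :=
  not_not.mp fun h => hz ⟨tPath G hG x z, h⟩

lemma mem_Bbr_self (x y : V) : y ∈ Bbr G y x :=
  fun ⟨p, hp⟩ => hp p.end_mem_support

lemma notMem_Bbr_of_ne {x y : V} (hxy : x ≠ y) : x ∉ Bbr G y x :=
  fun h => h ⟨Walk.nil, by simpa using hxy.symm⟩

lemma parent_eq_of_mem_support {x y z : V} (hy : y ∈ (tPath G hG x z).support) (hzy : z ≠ y) :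
    parent G hG x z = parent G hG y z := by
  have hpos : 0 < (tPath G hG y z).length :=
    Nat.pos_of_ne_zero fun h => hzy (Walk.eq_of_length_eq_zero h).symm
  unfold parent
  rw [tPath_eq_append_of_mem_support G hG hy, Walk.getVert_append, Walk.length_append,
    if_neg (by omega)]
  congr 1
  omega

end Paths

section Schedules

variable {V : Type*} (G : SimpleGraph V) (hG : G.IsTree) (w : V → V → ℝ) (ρ : ℝ) (σ : V → ℕ)

lemma recvTime_self (u : V) : recvTime G hG w ρ σ u u = 0 := by
  simp [recvTime, tPath_self]

lemma recvTime_eq_add_of_mem_support {x y z : V} (hy : y ∈ (tPath G hG x z).support) :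
    recvTime G hG w ρ σ x z = recvTime G hG w ρ σ x y + recvTime G hG w ρ σ y z := by
  rw [recvTime, tPath_eq_append_of_mem_support G hG hy, Walk.darts_append, List.map_append,
    List.sum_append, recvTime, recvTime]

variable {ρ σ}

lemma hop_mul_add_pw_le_recvTime (hρ : 0 ≤ ρ) {x : V} (hσ : ∀ z, z ≠ x → 1 ≤ σ z) (y : V) :
    (hop G hG x y : ℝ) * ρ + pw G hG w x y ≤ recvTime G hG w ρ σ x y := by
  have hslot : ∀ d ∈ (tPath G hG x y).darts, ρ + w d.fst d.snd ≤ σ d.snd * ρ + w d.fst d.snd :=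
    fun d hd => by
      have : (1 : ℝ) ≤ σ d.snd :=
        mod_cast hσ _ ((tPath_isPath G hG x y).snd_ne_start_of_mem_darts hd)
      nlinarith
  calc (hop G hG x y : ℝ) * ρ + pw G hG w x y
      = ((tPath G hG x y).darts.map fun d => ρ + w d.fst d.snd).sum := by
        simp [hop, pw, List.sum_map_add, ← Walk.length_darts]
    _ ≤ recvTime G hG w ρ σ x y := List.sum_le_sum hslot

lemma add_sSup_recvTime_Bbr_le [Finite V] (x y : V) :
    recvTime G hG w ρ σ x y + sSup (recvTime G hG w ρ σ y '' Bbr G y x)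
      ≤ sSup (recvTime G hG w ρ σ x '' Set.univ) := by
  rw [← le_sub_iff_add_le']
  refine csSup_le ⟨_, Set.mem_image_of_mem _ (mem_Bbr_self G x y)⟩ ?_
  rintro _ ⟨z, hz, rfl⟩
  rw [le_sub_iff_add_le', ← recvTime_eq_add_of_mem_support G hG w ρ σ
    (mem_support_tPath_of_mem_Bbr G hG hz)]
  exact le_csSup (Set.toFinite _).bddAbove (Set.mem_image_of_mem _ (Set.mem_univ z))

end Schedules

section BroadcastTime

variable {V : Type*} (G : SimpleGraph V) (hG : G.IsTree) (w : V → V → ℝ) (ρ : ℝ)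

lemma Valid.restrict_Bbr {σ : V → ℕ} {x y : V} (hσ : Valid G hG σ x Set.univ) (hxy : x ≠ y) :
    Valid G hG σ y (Bbr G y x) := by
  have hzx : ∀ z ∈ Bbr G y x, z ≠ x := fun z hz h => notMem_Bbr_of_ne G hxy (h ▸ hz)
  refine ⟨fun z hz _ => hσ.1 z trivial (hzx z hz), ?_⟩
  intro z₁ hz₁ z₂ hz₂ h₁ h₂ hz₁₂ hpar
  refine hσ.2 z₁ trivial z₂ trivial (hzx z₁ hz₁) (hzx z₂ hz₂) hz₁₂ ?_
  rwa [parent_eq_of_mem_support G hG (mem_support_tPath_of_mem_Bbr G hG hz₁) h₁,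
    parent_eq_of_mem_support G hG (mem_support_tPath_of_mem_Bbr G hG hz₂) h₂]

variable [Finite V]

lemma exists_valid (u : V) (S : Set V) : ∃ σ, Valid G hG σ u S := by
  obtain ⟨n, ⟨e⟩⟩ := Finite.exists_equiv_fin V
  refine ⟨fun z => e z + 1, fun _ _ _ => Nat.le_add_left 1 _, ?_⟩
  intro z₁ _ z₂ _ _ _ hz _ h
  exact hz (e.injective (Fin.ext (Nat.succ_injective h)))

lemma bTime_le_of_valid {σ : V → ℕ} {u : V} {S : Set V} (hσ : Valid G hG σ u S) (hu : u ∈ S) :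
    bTime G hG w ρ u S ≤ sSup (recvTime G hG w ρ σ u '' S) := by
  refine csInf_le ⟨0, ?_⟩ ⟨σ, hσ, rfl⟩
  rintro _ ⟨τ, -, rfl⟩
  rw [← recvTime_self G hG w ρ τ u]
  exact le_csSup (Set.toFinite _).bddAbove (Set.mem_image_of_mem _ hu)

lemma le_bTime_of_forall_valid {c : ℝ} {u : V} {S : Set V}
    (h : ∀ σ, Valid G hG σ u S → c ≤ sSup (recvTime G hG w ρ σ u '' S)) :
    c ≤ bTime G hG w ρ u S := by
  obtain ⟨σ, hσ⟩ := exists_valid G hG u S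
  refine le_csInf ⟨_, σ, hσ, rfl⟩ ?_
  rintro _ ⟨τ, hτ, rfl⟩
  exact h τ hτ

end BroadcastTime

theorem stmt5_general {V : Type*} [Fintype V] (G : SimpleGraph V) (hG : G.IsTree)
    (w : V → V → ℝ) (ρ : ℝ) (hρ : 0 < ρ)
    (x y : V) (hxy : x ≠ y) :
    (hop G hG x y : ℝ) * ρ + pw G hG w x y + bTime G hG w ρ y (Bbr G y x)
      ≤ bTimeT G hG w ρ x := by
  refine le_bTime_of_forall_valid G hG w ρ fun σ hσ => ?_
  calc (hop G hG x y : ℝ) * ρ + pw G hG w x y + bTime G hG w ρ y (Bbr G y x)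
      ≤ recvTime G hG w ρ σ x y + sSup (recvTime G hG w ρ σ y '' Bbr G y x) :=
        add_le_add (hop_mul_add_pw_le_recvTime G hG w hρ.le (fun z hz => hσ.1 z trivial hz) y)
          (bTime_le_of_valid G hG w ρ (hσ.restrict_Bbr G hG hxy) (mem_Bbr_self G x y))
    _ ≤ sSup (recvTime G hG w ρ σ x '' Set.univ) := add_sSup_recvTime_Bbr_le G hG w x y

/-- For distinct vertices `x, y`,
`b_time(x,T) ≥ d(x,y)·ρ + w̃(x,y) + b_time(y, B(y,x))`. -/
theorem stmt5 {V : Type*} [Fintype V] [DecidableEq V] (G : SimpleGraph V) (hG : G.IsTree)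
    (w : V → V → ℝ) (hsym : Wsymm w) (hpos : Wpos G w) (ρ : ℝ) (hρ : 0 < ρ)
    (x y : V) (hxy : x ≠ y) :
    (hop G hG x y : ℝ) * ρ + pw G hG w x y + bTime G hG w ρ y (Bbr G y x)
      ≤ bTimeT G hG w ρ x :=
  stmt5_general G hG w ρ hρ x y hxy

end Postal
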